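/- arXiv:2408.05863 — 3 statements merged into one kernel-verified Lean document; each statement's English description precedes it below -/
import Mathlib

section
/- Let n ≥ 1 and let T be an additive subgroup of ℝ^{n+1} which is invariant under SO₀(n,1), i.e. A v ∈ T for every A ∈ SO₀(n,1) and every v ∈ T. If T contains a vector v with η(v) > 0 (a nonzero spacelike vector), then T = ℝ^{n+1}. -/
noncomputable section

open Matrix

/-- Minkowski space `ℝ^{n,1}`: the underlying vector space. -/
abbrev Mink (n : ℕ) := Fin (n + 1) → ℝ

/-- The Minkowski quadratic form `η(u) = u₁² + ⋯ + uₙ² − u_{n+1}²`. -/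
def eta (n : ℕ) (u : Mink n) : ℝ :=
  (∑ i : Fin n, u i.castSucc ^ 2) - u (Fin.last n) ^ 2

/-- The Lorentz group `O(n,1)`: linear automorphisms of `ℝ^{n+1}` preserving `η`. -/
def LorentzGroup (n : ℕ) : Subgroup (GL (Fin (n + 1)) ℝ) where
  carrier := { A | ∀ u : Mink n, eta n ((A : Matrix (Fin (n + 1)) (Fin (n + 1)) ℝ) *ᵥ u) = eta n u }
  one_mem' := by intro u; simp
  mul_mem' := by
    intro A B hA hB u
    simp only [Units.val_mul, ← Matrix.mulVec_mulVec]
    rw [hA, hB]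
  inv_mem' := by
    intro A hA u
    have := hA ((A⁻¹ : GL (Fin (n + 1)) ℝ) *ᵥ u)
    rw [Matrix.mulVec_mulVec, ← Units.val_mul, mul_inv_cancel, Units.val_one,
      Matrix.one_mulVec] at this
    exact this.symm

/-- `SO₀(n,1)`: the identity component of the Lorentz group, as a subgroup of `GL`. -/
def SOo (n : ℕ) : Subgroup (GL (Fin (n + 1)) ℝ) :=
  (Subgroup.connectedComponentOfOne (LorentzGroup n)).map (LorentzGroup n).subtype


/-!
The matrices `v ∧ w : x ↦ η(v, x) w - η(w, x) v` are `η`-skew-adjoint, so `exp (v ∧ w)` is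
joined to `1` inside `O(n,1)` by `s ↦ exp (s • (v ∧ w))`, and the orbit map `w ↦ exp (v ∧ w) v`
takes values in `T` when `v ∈ T`. Its differential at `0` is `w ↦ η(v, v) w - η(v, w) v`, with
image `v^⊥`. A spacelike `v` has a timelike `a ∈ v^⊥`; the differential of `η(a, exp (v ∧ w) v)`
is then nonzero, so some `u` in the orbit of `v` has `η(a, u) ≠ 0`, i.e. `v^⊥ + u^⊥ = ℝ^{n+1}`.
Thus `(w₁, w₂) ↦ exp (v ∧ w₁) v + exp (u ∧ w₂) u` is a submersion at `0` with values in `T`, so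
`T` is an open, hence closed, subgroup of the connected group `ℝ^{n+1}`.
-/

open Matrix NormedSpace Topology

namespace AddSubgroup

theorem eq_top_of_mem_nhds {G : Type*} [AddGroup G] [TopologicalSpace G]
    [SeparatelyContinuousAdd G] [PreconnectedSpace G] (T : AddSubgroup G) {g : G}
    (hg : (T : Set G) ∈ 𝓝 g) : T = ⊤ := by
  have hT : IsOpen (T : Set G) := T.isOpen_of_mem_nhds hg
  exact coe_eq_univ.1 (IsClopen.eq_univ ⟨T.isClosed_of_isOpen hT, hT⟩ ⟨0, T.zero_mem⟩)

theorem eq_top_of_hasStrictFDerivAt {𝕜 E F : Type*} [NontriviallyNormedField 𝕜]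
    [NormedAddCommGroup E] [NormedSpace 𝕜 E] [CompleteSpace E]
    [NormedAddCommGroup F] [NormedSpace 𝕜 F] [CompleteSpace F] [PreconnectedSpace F]
    {T : AddSubgroup F} {f : E → F} {f' : E →L[𝕜] F} {a : E} (hf : HasStrictFDerivAt f f' a)
    (hf' : LinearMap.range (f' : E →ₗ[𝕜] F) = ⊤) (hfT : ∀ x, f x ∈ T) : T = ⊤ :=
  T.eq_top_of_mem_nhds <| hf.map_nhds_eq_of_surj hf' ▸ Filter.mem_map.2 (Filter.univ_mem' hfT)

end AddSubgroup

namespace Matrix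

variable {ι R : Type*} [Fintype ι] [CommRing R]

def wedge (J : Matrix ι ι R) (v : ι → R) : (ι → R) →ₗ[R] Matrix ι ι R :=
  (vecMulVecBilin R R).flip (v ᵥ* J) - vecMulVecBilin R R v ∘ₗ J.vecMulLinear

theorem wedge_apply (J : Matrix ι ι R) (v w : ι → R) :
    wedge J v w = vecMulVec w (v ᵥ* J) - vecMulVec v (w ᵥ* J) :=
  rfl

theorem isSkewAdjoint_wedge {J : Matrix ι ι R} (hJ : J.IsSymm) (v w : ι → R) :
    J.IsSkewAdjoint (wedge J v w) := by
  have hmulVec (x : ι → R) : J *ᵥ x = x ᵥ* J := by rw [← mulVec_transpose, hJ.eq]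
  simp only [Matrix.IsSkewAdjoint, IsAdjointPair, wedge_apply, transpose_sub,
    transpose_vecMulVec, sub_mul, mul_sub, vecMulVec_mul, mul_vecMulVec, hmulVec, neg_sub]

variable [DecidableEq ι]

theorem wedge_mulVec (J : Matrix ι ι R) (v w x : ι → R) :
    wedge J v w *ᵥ x = J.toBilin' v x • w - J.toBilin' w x • v := by
  simp [wedge_apply, sub_mulVec, vecMulVec_mulVec, toBilin'_apply', dotProduct_mulVec]

theorem wedge_inv_smul_mulVec_self {K : Type*} [Field K] {J : Matrix ι ι K} (hJ : J.IsSymm)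
    {v x : ι → K} (hv : J.toBilin' v v ≠ 0) (hx : J.toBilin' v x = 0) :
    wedge J v ((J.toBilin' v v)⁻¹ • x) *ᵥ v = x := by
  rw [wedge_mulVec, map_smul, LinearMap.smul_apply, (isSymm_toBilin'_iff_isSymm.2 hJ).eq x v, hx,
    smul_smul, mul_inv_cancel₀ hv, smul_zero, zero_smul, one_smul, sub_zero]

theorem toBilin'_mulVec_mulVec {J A : Matrix ι ι R} (h : Aᵀ * J * A = J) (x y : ι → R) :
    J.toBilin' (A *ᵥ x) (A *ᵥ y) = J.toBilin' x y := by
  simpa [h] using congr($(toBilin'_comp J A A) x y)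

theorem IsSkewAdjoint.transpose_exp_mul_mul_exp {J M : Matrix ι ι ℝ} (hM : J.IsSkewAdjoint M) :
    (exp M)ᵀ * J * exp M = J := by
  have h : SemiconjBy J M (-Mᵀ) := by
    rw [SemiconjBy, neg_mul, show Mᵀ * J = J * -M from hM, mul_neg, neg_neg]
  rw [← exp_transpose, ← neg_neg Mᵀ]
  open scoped Norms.Operator in exact h.exp_neg_mul_mul_exp_eq_self

theorem continuous_exp_smul (M : Matrix ι ι ℝ) : Continuous fun s : ℝ => exp (s • M) := by
  open scoped Norms.Operator in exact exp_continuous.comp (continuous_id.smul continuous_const)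

theorem hasStrictFDerivAt_exp_mulVec {E : Type*} [NormedAddCommGroup E] [NormedSpace ℝ E]
    [FiniteDimensional ℝ E] (L : E →ₗ[ℝ] Matrix ι ι ℝ) (x : ι → ℝ) :
    HasStrictFDerivAt (fun w => exp (L w) *ᵥ x)
      (LinearMap.toContinuousLinearMap ((mulVecBilin ℝ ℝ).flip x ∘ₗ L)) 0 := by
  open scoped Norms.Operator in
  have hexp : HasStrictFDerivAt exp (1 : Matrix ι ι ℝ →L[ℝ] Matrix ι ι ℝ) (L 0) := by
    rw [map_zero]
    exact hasStrictFDerivAt_exp_zero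
  open scoped Norms.Operator in
  exact ((mulVecBilin ℝ ℝ).flip x).toContinuousLinearMap.hasStrictFDerivAt.comp 0
    (hexp.comp 0 (LinearMap.toContinuousLinearMap L).hasStrictFDerivAt)

theorem exists_toBilin'_exp_wedge_mulVec_ne_zero {J : Matrix ι ι ℝ} (hJ : J.IsSymm) {v a : ι → ℝ}
    (hvv : J.toBilin' v v ≠ 0) (hva : J.toBilin' v a = 0) (haa : J.toBilin' a a ≠ 0) :
    ∃ w, J.toBilin' a (exp (wedge J v w) *ᵥ v) ≠ 0 := by
  by_contra! h
  have hderiv := ((J.toBilin' a).toContinuousLinearMap.hasFDerivAt).comp (0 : ι → ℝ)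
    (hasStrictFDerivAt_exp_mulVec (wedge J v) v).hasFDerivAt
  have hconst : ((J.toBilin' a).toContinuousLinearMap ∘ fun w => exp (wedge J v w) *ᵥ v) =
      fun _ => 0 := funext h
  rw [hconst] at hderiv
  have hzero := congr($(hderiv.unique (hasFDerivAt_const 0 0)) a)
  simp only [ContinuousLinearMap.comp_apply, LinearMap.coe_toContinuousLinearMap',
    LinearMap.comp_apply, LinearMap.flip_apply, mulVecBilin_apply, wedge_mulVec, map_sub,
    map_smul, smul_eq_mul, (isSymm_toBilin'_iff_isSymm.2 hJ).eq a v, hva] at hzero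
  exact mul_ne_zero hvv haa (by simpa using hzero)

theorem exists_wedge_mulVec_add_wedge_mulVec_eq {K : Type*} [Field K] {J : Matrix ι ι K}
    (hJ : J.IsSymm) {u v a : ι → K} (huu : J.toBilin' u u ≠ 0) (hvv : J.toBilin' v v ≠ 0)
    (hva : J.toBilin' v a = 0) (hua : J.toBilin' u a ≠ 0) (x : ι → K) :
    ∃ w₁ w₂, wedge J v w₁ *ᵥ v + wedge J u w₂ *ᵥ u = x := by
  -- `x = t a + (x - t a)` with `t a ∈ v^⊥` and `x - t a ∈ u^⊥`
  set t := J.toBilin' u x / J.toBilin' u a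
  have hvta : J.toBilin' v (t • a) = 0 := by rw [map_smul, hva, smul_zero]
  have hux : J.toBilin' u (x - t • a) = 0 := by
    rw [map_sub, map_smul, smul_eq_mul, div_mul_cancel₀ _ hua, sub_self]
  refine ⟨(J.toBilin' v v)⁻¹ • t • a, (J.toBilin' u u)⁻¹ • (x - t • a), ?_⟩
  rw [wedge_inv_smul_mulVec_self hJ hvv hvta, wedge_inv_smul_mulVec_self hJ huu hux,
    add_sub_cancel]

theorem eq_top_of_forall_exp_mulVec_mem {J : Matrix ι ι ℝ} (hJ : J.IsSymm)
    (T : AddSubgroup (ι → ℝ)) (hT : ∀ M, J.IsSkewAdjoint M → ∀ x ∈ T, exp M *ᵥ x ∈ T)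
    {v a : ι → ℝ} (hvT : v ∈ T) (hvv : J.toBilin' v v ≠ 0) (hva : J.toBilin' v a = 0)
    (haa : J.toBilin' a a ≠ 0) : T = ⊤ := by
  obtain ⟨w, hau⟩ := exists_toBilin'_exp_wedge_mulVec_ne_zero hJ hvv hva haa
  set u := exp (wedge J v w) *ᵥ v
  have huT : u ∈ T := hT _ (isSkewAdjoint_wedge hJ v w) v hvT
  have huu : J.toBilin' u u ≠ 0 := by
    rwa [toBilin'_mulVec_mulVec (isSkewAdjoint_wedge hJ v w).transpose_exp_mul_mul_exp]
  have hua : J.toBilin' u a ≠ 0 := by rwa [(isSymm_toBilin'_iff_isSymm.2 hJ).eq]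
  have hF := ((hasStrictFDerivAt_exp_mulVec (wedge J v) v).comp (f := Prod.fst)
    (0 : (ι → ℝ) × (ι → ℝ)) hasStrictFDerivAt_fst).add
    ((hasStrictFDerivAt_exp_mulVec (wedge J u) u).comp (f := Prod.snd)
      (0 : (ι → ℝ) × (ι → ℝ)) hasStrictFDerivAt_snd)
  refine AddSubgroup.eq_top_of_hasStrictFDerivAt hF (LinearMap.range_eq_top.2 fun x => ?_)
    fun p => T.add_mem (hT _ (isSkewAdjoint_wedge hJ v _) v hvT)
      (hT _ (isSkewAdjoint_wedge hJ u _) u huT)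
  obtain ⟨w₁, w₂, hx⟩ := exists_wedge_mulVec_add_wedge_mulVec_eq hJ huu hvv hva hua x
  exact ⟨(w₁, w₂), hx⟩

end Matrix

def minkowskiMatrix (n : ℕ) : Matrix (Fin (n + 1)) (Fin (n + 1)) ℝ :=
  diagonal fun i => if i = Fin.last n then -1 else 1

theorem minkowskiMatrix_isSymm (n : ℕ) : (minkowskiMatrix n).IsSymm :=
  isSymm_diagonal _

theorem eta_eq_toBilin' (n : ℕ) (u : Mink n) : eta n u = (minkowskiMatrix n).toBilin' u u := by
  simp [eta, minkowskiMatrix, toBilin'_apply', dotProduct, mulVec_diagonal, Fin.sum_univ_castSucc,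
    Fin.castSucc_ne_last, sq]
  ring

theorem exists_timelike_orthogonal {n : ℕ} {v : Mink n}
    (hv : 0 < (minkowskiMatrix n).toBilin' v v) :
    ∃ a, (minkowskiMatrix n).toBilin' v a = 0 ∧ (minkowskiMatrix n).toBilin' a a < 0 := by
  set B := (minkowskiMatrix n).toBilin'
  set e : Mink n := Pi.single (Fin.last n) 1
  have hee : B e e = -1 := by simp [B, e, minkowskiMatrix]
  have hev : B e v = B v e := (isSymm_toBilin'_iff_isSymm.2 (minkowskiMatrix_isSymm n)).eq e v
  refine ⟨B v v • e - B v e • v, ?_, ?_⟩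
  · simp only [map_sub, map_smul, smul_eq_mul]
    ring
  · simp only [map_sub, map_smul, LinearMap.sub_apply, LinearMap.smul_apply, smul_eq_mul, hee,
      hev]
    nlinarith [sq_nonneg (B v e)]

theorem exists_mem_SOo_coe_eq_exp {n : ℕ} {M : Matrix (Fin (n + 1)) (Fin (n + 1)) ℝ}
    (hM : (minkowskiMatrix n).IsSkewAdjoint M) : ∃ A ∈ SOo n, (A : Matrix _ _ ℝ) = exp M := by
  have hsM (s : ℝ) : (minkowskiMatrix n).IsSkewAdjoint (s • M) := by
    rw [Matrix.IsSkewAdjoint, IsAdjointPair, transpose_smul, smul_mul, show Mᵀ * _ = _ from hM,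
      ← Matrix.mul_smul, smul_neg]
  have hmem (s : ℝ) : (isUnit_exp (s • M)).unit ∈ LorentzGroup n := fun u => by
    rw [IsUnit.unit_spec, eta_eq_toBilin', eta_eq_toBilin',
      toBilin'_mulVec_mulVec (hsM s).transpose_exp_mul_mul_exp]
  let φ : ℝ → LorentzGroup n := fun s => ⟨_, hmem s⟩
  have hφ : Continuous φ := by
    refine (Units.continuous_iff.2 ⟨continuous_exp_smul M, ?_⟩).subtype_mk _
    simp only [coe_units_inv, IsUnit.unit_spec, ← Matrix.exp_neg, ← neg_smul]
    exact (continuous_exp_smul M).comp continuous_neg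
  have h0 : φ 0 = 1 := by
    ext : 2
    simp [φ]
  have h1 : φ 1 ∈ connectedComponent (φ 0) :=
    (isPreconnected_range hφ).subset_connectedComponent ⟨0, rfl⟩ ⟨1, rfl⟩
  rw [h0] at h1
  exact ⟨φ 1, Subgroup.mem_map.2 ⟨φ 1, h1, rfl⟩, by simp [φ]⟩

theorem invariant_addSubgroup_eq_top_of_spacelike_general (n : ℕ)
    (T : AddSubgroup (Mink n))
    (hinv : ∀ A : GL (Fin (n + 1)) ℝ, A ∈ SOo n → ∀ v ∈ T, (A : Matrix (Fin (n + 1)) (Fin (n + 1)) ℝ) *ᵥ v ∈ T)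
    (hsp : ∃ v ∈ T, 0 < eta n v) :
    T = ⊤ := by
  obtain ⟨v, hvT, hv⟩ := hsp
  rw [eta_eq_toBilin'] at hv
  obtain ⟨a, hva, haa⟩ := exists_timelike_orthogonal hv
  refine eq_top_of_forall_exp_mulVec_mem (minkowskiMatrix_isSymm n) T ?_ hvT hv.ne' hva haa.ne
  intro M hM x hx
  obtain ⟨A, hA, hAM⟩ := exists_mem_SOo_coe_eq_exp hM
  exact hAM ▸ hinv A hA x hx

/-- An `SO₀(n,1)`-invariant additive subgroup of `ℝ^{n+1}` containing a
nonzero spacelike vector is all of `ℝ^{n+1}`. -/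
theorem invariant_addSubgroup_eq_top_of_spacelike (n : ℕ) (hn : 1 ≤ n)
    (T : AddSubgroup (Mink n))
    (hinv : ∀ A : GL (Fin (n + 1)) ℝ, A ∈ SOo n → ∀ v ∈ T, (A : Matrix (Fin (n + 1)) (Fin (n + 1)) ℝ) *ᵥ v ∈ T)
    (hsp : ∃ v ∈ T, 0 < eta n v) :
    T = ⊤ :=
  invariant_addSubgroup_eq_top_of_spacelike_general n T hinv hsp
end
end

section
/- Let n ≥ 1, r > 0, and let T be an additive subgroup of ℝ^{n+1} invariant under SO₀(n,1) which contains some vector v with η(v) = r². Then T contains every vector u ∈ ℝ^{n+1} with η(u) < r²; in particular T contains all timelike and all lightlike vectors. -/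
noncomputable section

open Matrix

/-!
The boosts `boost i s`, hyperbolic rotations of the `(xᵢ, t)`-plane, form continuous one-parameter
groups of Lorentz transformations and so lie in `SO₀(n,1)`. As
`boost i s - boost i (-s) = 2 sinh s • planeSwap i` and `sinh` is onto `ℝ`, a boost-invariant
subgroup containing `w` contains every real multiple of `planeSwap i *ᵥ w` and of
`planeSwap i *ᵥ (planeSwap i *ᵥ w) = planeProj i *ᵥ w`; when `wᵢ² ≠ t²` these span the
`(xᵢ, t)`-plane. A non-null vector of `T` yields such a `w`. Then `e_t ∈ T`, and the multiples
of `planeSwap j *ᵥ e_t = e_j` show that `T` is the whole space.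
-/

namespace Minkowski

open Real

variable {n : ℕ}

def planeProj (i : Fin n) : Matrix (Fin (n + 1)) (Fin (n + 1)) ℝ :=
  single i.castSucc i.castSucc 1 + single (Fin.last n) (Fin.last n) 1

def planeSwap (i : Fin n) : Matrix (Fin (n + 1)) (Fin (n + 1)) ℝ :=
  single i.castSucc (Fin.last n) 1 + single (Fin.last n) i.castSucc 1

-- `[[cosh s, sinh s], [sinh s, cosh s]]` on the coordinates `(xᵢ, t)`, the identity elsewhere.
def boost (i : Fin n) (s : ℝ) : Matrix (Fin (n + 1)) (Fin (n + 1)) ℝ :=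
  1 + (cosh s - 1) • planeProj i + sinh s • planeSwap i

lemma planeProj_mul_planeProj (i : Fin n) : planeProj i * planeProj i = planeProj i := by
  simp [planeProj, add_mul, mul_add, Fin.castSucc_ne_last i, (Fin.castSucc_ne_last i).symm]

lemma planeSwap_mul_planeSwap (i : Fin n) : planeSwap i * planeSwap i = planeProj i := by
  simp [planeProj, planeSwap, add_mul, mul_add, Fin.castSucc_ne_last i,
    (Fin.castSucc_ne_last i).symm, add_comm]

lemma planeProj_mul_planeSwap (i : Fin n) : planeProj i * planeSwap i = planeSwap i := by
  simp [planeProj, planeSwap, add_mul, mul_add, Fin.castSucc_ne_last i,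
    (Fin.castSucc_ne_last i).symm]

lemma planeSwap_mul_planeProj (i : Fin n) : planeSwap i * planeProj i = planeSwap i := by
  simp [planeProj, planeSwap, add_mul, mul_add, Fin.castSucc_ne_last i,
    (Fin.castSucc_ne_last i).symm, add_comm]

lemma boost_zero (i : Fin n) : boost i 0 = 1 := by
  simp [boost]

lemma boost_add (i : Fin n) (s t : ℝ) : boost i (s + t) = boost i s * boost i t := by
  simp only [boost, add_mul, mul_add, one_mul, mul_one, smul_mul_assoc,
    mul_smul_comm, planeProj_mul_planeProj, planeSwap_mul_planeSwap, planeProj_mul_planeSwap,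
    planeSwap_mul_planeProj, cosh_add, sinh_add]
  module

lemma boost_sub_boost_neg (i : Fin n) (s : ℝ) :
    boost i s - boost i (-s) = (2 * sinh s) • planeSwap i := by
  simp only [boost, cosh_neg, sinh_neg]
  module

lemma continuous_boost (i : Fin n) : Continuous (boost i) := by
  unfold boost
  fun_prop

lemma planeProj_mulVec (i : Fin n) (u : Mink n) :
    planeProj i *ᵥ u =
      Pi.single i.castSucc (u i.castSucc) + Pi.single (Fin.last n) (u (Fin.last n)) := by
  simp [planeProj, add_mulVec, single_mulVec_eq, ← Pi.single_smul']

lemma planeSwap_mulVec (i : Fin n) (u : Mink n) :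
    planeSwap i *ᵥ u =
      Pi.single i.castSucc (u (Fin.last n)) + Pi.single (Fin.last n) (u i.castSucc) := by
  simp [planeSwap, add_mulVec, single_mulVec_eq, ← Pi.single_smul']

lemma eta_update_castSucc (u : Mink n) (i : Fin n) (a : ℝ) :
    eta n (Function.update u i.castSucc a) = eta n u - u i.castSucc ^ 2 + a ^ 2 := by
  have hsum : ∑ j : Fin n, (Function.update u i.castSucc a j.castSucc ^ 2 - u j.castSucc ^ 2)
      = a ^ 2 - u i.castSucc ^ 2 := by
    rw [Finset.sum_eq_single i (fun j _ hj => by simp [hj]) (by simp)]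
    simp
  simp only [eta, Function.update_of_ne (Fin.castSucc_ne_last i).symm]
  rw [Finset.sum_sub_distrib] at hsum
  linarith

lemma eta_update_last (u : Mink n) (t : ℝ) :
    eta n (Function.update u (Fin.last n) t) = eta n u + u (Fin.last n) ^ 2 - t ^ 2 := by
  simp [eta]

lemma boost_mulVec (i : Fin n) (s : ℝ) (u : Mink n) :
    boost i s *ᵥ u = Function.update (Function.update u i.castSucc
      (cosh s * u i.castSucc + sinh s * u (Fin.last n))) (Fin.last n)
      (sinh s * u i.castSucc + cosh s * u (Fin.last n)) := by
  ext k
  simp only [boost, add_mulVec, smul_mulVec, one_mulVec, planeProj_mulVec, planeSwap_mulVec,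
    Pi.add_apply, Pi.smul_apply, Pi.single_apply, Function.update_apply, smul_eq_mul]
  have := Fin.castSucc_ne_last i
  have := (Fin.castSucc_ne_last i).symm
  split_ifs <;> simp_all <;> ring

lemma eta_boost_mulVec (i : Fin n) (s : ℝ) (u : Mink n) : eta n (boost i s *ᵥ u) = eta n u := by
  rw [boost_mulVec, eta_update_last, eta_update_castSucc,
    Function.update_of_ne (Fin.castSucc_ne_last i).symm]
  linear_combination (u i.castSucc ^ 2 - u (Fin.last n) ^ 2) * cosh_sq_sub_sinh_sq s

lemma mem_SOo_of_continuous {f : ℝ → GL (Fin (n + 1)) ℝ} (hf : Continuous f) (h0 : f 0 = 1)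
    (hL : ∀ s, f s ∈ LorentzGroup n) (s : ℝ) : f s ∈ SOo n := by
  let g : ℝ → LorentzGroup n := fun s => ⟨f s, hL s⟩
  have hrange : Set.range g ⊆ connectedComponent 1 :=
    (isPreconnected_range (hf.subtype_mk hL)).subset_connectedComponent ⟨0, Subtype.ext h0⟩
  exact Subgroup.mem_map.mpr ⟨g s, hrange ⟨s, rfl⟩, rfl⟩

def boostGL (i : Fin n) (s : ℝ) : GL (Fin (n + 1)) ℝ :=
  ⟨boost i s, boost i (-s), by rw [← boost_add, add_neg_cancel, boost_zero],
    by rw [← boost_add, neg_add_cancel, boost_zero]⟩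

lemma boostGL_mem_SOo (i : Fin n) (s : ℝ) : boostGL i s ∈ SOo n :=
  mem_SOo_of_continuous (f := boostGL i)
    (Units.continuous_iff.mpr ⟨continuous_boost i, (continuous_boost i).comp continuous_neg⟩)
    (Units.ext (boost_zero i)) (fun s => eta_boost_mulVec i s) s

section BoostInvariant

variable {T : AddSubgroup (Mink n)} {i : Fin n}

lemma smul_planeSwap_mulVec_mem (hT : ∀ s, ∀ w ∈ T, boost i s *ᵥ w ∈ T) {u : Mink n}
    (hu : u ∈ T) (c : ℝ) : c • (planeSwap i *ᵥ u) ∈ T := by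
  have h := T.sub_mem (hT (arsinh (c / 2)) u hu) (hT (-arsinh (c / 2)) u hu)
  rwa [← sub_mulVec, boost_sub_boost_neg, smul_mulVec, sinh_arsinh,
    mul_div_cancel₀ c two_ne_zero] at h

lemma smul_planeProj_mulVec_mem (hT : ∀ s, ∀ w ∈ T, boost i s *ᵥ w ∈ T) {u : Mink n}
    (hu : u ∈ T) (c : ℝ) : c • (planeProj i *ᵥ u) ∈ T := by
  have hSu : planeSwap i *ᵥ u ∈ T := by
    simpa using smul_planeSwap_mulVec_mem hT hu 1
  simpa [mulVec_mulVec, planeSwap_mul_planeSwap] using smul_planeSwap_mulVec_mem hT hSu c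

lemma single_add_single_mem (hT : ∀ s, ∀ w ∈ T, boost i s *ᵥ w ∈ T) {w : Mink n}
    (hwT : w ∈ T) (hw : w i.castSucc ^ 2 ≠ w (Fin.last n) ^ 2) (a b : ℝ) :
    Pi.single i.castSucc a + Pi.single (Fin.last n) b ∈ T := by
  set p := w i.castSucc
  set q := w (Fin.last n)
  have hpq : p ^ 2 - q ^ 2 ≠ 0 := sub_ne_zero.mpr hw
  -- solve `α • (p, q) + β • (q, p) = (a, b)` in the `(xᵢ, t)`-plane; the determinant is `p² - q²`
  have h := T.add_mem (smul_planeProj_mulVec_mem hT hwT ((a * p - b * q) / (p ^ 2 - q ^ 2)))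
    (smul_planeSwap_mulVec_mem hT hwT ((b * p - a * q) / (p ^ 2 - q ^ 2)))
  convert h using 1
  ext k
  simp only [planeProj_mulVec, planeSwap_mulVec, Pi.add_apply, Pi.smul_apply, Pi.single_apply,
    smul_eq_mul]
  have := Fin.castSucc_ne_last i
  have := (Fin.castSucc_ne_last i).symm
  split_ifs <;> simp_all <;> field_simp <;> ring

-- If every `w ∈ T` had `wᵢ² = t²` for all `i`, then `η(v) = (n - 1) t²` forces `n ≥ 2`, and the
-- null vector `planeProj 0 *ᵥ v ∈ T` has `x₁ = 0`, so `t = 0` and `η(v) = 0`.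
lemma exists_mem_sq_ne (hn : 1 ≤ n) (hT : ∀ i s, ∀ w ∈ T, boost i s *ᵥ w ∈ T) {v : Mink n}
    (hvT : v ∈ T) (hv : eta n v ≠ 0) :
    ∃ i : Fin n, ∃ w ∈ T, w i.castSucc ^ 2 ≠ w (Fin.last n) ^ 2 := by
  by_contra! h
  have hη : eta n v = (n - 1) * v (Fin.last n) ^ 2 := by
    simp only [eta, h _ v hvT, Finset.sum_const, Finset.card_univ, Fintype.card_fin, nsmul_eq_mul]
    ring
  have hn2 : 2 ≤ n := by
    by_contra! hn1
    obtain rfl : n = 1 := by omega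
    exact hv (by simpa using hη)
  have hw := h ⟨1, hn2⟩ (planeProj ⟨0, hn⟩ *ᵥ v)
    (by simpa using smul_planeProj_mulVec_mem (hT ⟨0, hn⟩) hvT 1)
  have h10 : (⟨1, hn2⟩ : Fin n).castSucc ≠ (⟨0, hn⟩ : Fin n).castSucc := by simp [Fin.ext_iff]
  have hlast : v (Fin.last n) = 0 := by
    simp only [planeProj_mulVec, Pi.add_apply, Pi.single_eq_of_ne h10, Pi.single_eq_same,
      Pi.single_eq_of_ne (Fin.castSucc_ne_last _),
      Pi.single_eq_of_ne (Fin.castSucc_ne_last _).symm, zero_add, add_zero] at hw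
    simpa using hw.symm
  exact hv (by rw [hη, hlast]; ring)

lemma eq_top_of_single_last_mem (hT : ∀ i s, ∀ w ∈ T, boost i s *ᵥ w ∈ T)
    (h : ∀ b, Pi.single (Fin.last n) b ∈ T) : T = ⊤ := by
  refine eq_top_iff.mpr fun u _ => ?_
  rw [← Finset.univ_sum_single u]
  refine T.sum_mem fun k _ => ?_
  induction k using Fin.lastCases with
  | last => exact h _
  | cast j =>
    simpa only [planeSwap_mulVec, Pi.single_eq_same,
      Pi.single_eq_of_ne (Fin.castSucc_ne_last j), Pi.single_zero, add_zero, ← Pi.single_smul',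
      smul_eq_mul, mul_one] using
      smul_planeSwap_mulVec_mem (hT j) (h 1) (u j.castSucc)

end BoostInvariant

end Minkowski

open Minkowski in
/-- If an `SO₀(n,1)`-invariant additive subgroup `T` of `ℝ^{n+1}` contains
a vector `v` with `η(v) = r²` (`r > 0`), then `T` contains every `u` with `η(u) < r²`;
in particular `T` contains all timelike and all lightlike vectors. -/
theorem invariant_addSubgroup_contains_small_eta (n : ℕ) (hn : 1 ≤ n) (r : ℝ) (hr : 0 < r)
    (T : AddSubgroup (Mink n))
    (hinv : ∀ A : GL (Fin (n + 1)) ℝ, A ∈ SOo n → ∀ v ∈ T, (A : Matrix (Fin (n + 1)) (Fin (n + 1)) ℝ) *ᵥ v ∈ T)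
    (v : Mink n) (hvT : v ∈ T) (hv : eta n v = r ^ 2) :
    (∀ u : Mink n, eta n u < r ^ 2 → u ∈ T) ∧
      (∀ u : Mink n, eta n u ≤ 0 → u ∈ T) := by
  have hT : ∀ i s, ∀ w ∈ T, boost i s *ᵥ w ∈ T := fun i s => hinv _ (boostGL_mem_SOo i s)
  obtain ⟨i, w, hwT, hw⟩ := exists_mem_sq_ne hn hT hvT (by rw [hv]; positivity)
  have hTop : T = ⊤ := eq_top_of_single_last_mem hT fun b => by
    simpa using single_add_single_mem (hT i) hwT hw 0 b
  simp [hTop]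
end
end

section
/- Let n ≥ 1 and let T be an additive subgroup of ℝ^{n+1} which is invariant under SO₀(n,1). If T contains a timelike vector v (i.e. η(v) = −r² < 0 for some r > 0), then T contains a nonzero spacelike vector; in fact T contains a vector w with η(w) = r². Consequently T = ℝ^{n+1}. -/
noncomputable section

open Matrix

/-!
Let `e` be the last basis vector. Each sheet `{η = -s², u_{n+1} > 0}` is a single
`SO₀(n,1)`-orbit: the product of the Minkowski reflections in `p + s e` and in `s e` maps `s e` to
`p`, and replacing `p` by `t² p` joins it to the identity inside `O(n,1)`, the reflecting vectors
staying timelike. Hence `T` contains the sheet of radius `r` through `v` or `-v`. Using a spatial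
direction, `s e = (x, s/2) + (-x, s/2)` with both summands on that sheet once `s ≥ 2r`, so `T`
contains every sheet of radius at least `2r`; finally every vector `x` is the difference of
`x + s e` and `s e`, both on such sheets for `s` large.
-/

namespace LinearMap.BilinForm

variable {K V : Type*} [Field K] [AddCommGroup V] [Module K V] (B : LinearMap.BilinForm K V)

-- For isotropic `a`, `2 / B a a = 0` makes this the identity.
def reflection (a : V) : Module.End K V :=
  Module.preReflection a ((2 / B a a) • B a)

variable {B}

lemma reflection_apply (a u : V) : B.reflection a u = u - (2 * B a u / B a a) • a := by
  simp [reflection, Module.preReflection_apply, mul_div_right_comm]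

lemma reflection_mul_self (a : V) : B.reflection a * B.reflection a = 1 := by
  ext u
  by_cases h : B a a = 0
  · simp [reflection_apply, h]
  · exact Module.involutive_preReflection (by simpa using div_mul_cancel₀ (2 : K) h) u

lemma reflection_apply_self {a : V} (h : B a a ≠ 0) : B.reflection a a = -a :=
  Module.preReflection_apply_self (by simpa using div_mul_cancel₀ (2 : K) h)

lemma apply_reflection_reflection (hB : B.IsSymm) (a u w : V) :
    B (B.reflection a u) (B.reflection a w) = B u w := by
  by_cases h : B a a = 0
  · simp [reflection_apply, h]
  · simp only [reflection_apply, map_sub, map_smul, LinearMap.sub_apply, LinearMap.smul_apply,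
      smul_eq_mul, hB.eq u a]
    field_simp
    ring

lemma reflection_add_apply_neg (hB : B.IsSymm) {a b : V} (hab : B a a = B b b)
    (h : B (a + b) (a + b) ≠ 0) : B.reflection (a + b) (-b) = a := by
  have hsum : B (a + b) (a + b) = 2 * B (a + b) b := by
    simp only [map_add, LinearMap.add_apply, hab, hB.eq a b]; ring
  have : 2 * B (a + b) (-b) / B (a + b) (a + b) = -1 := by
    rw [hsum] at h ⊢; rw [map_neg, mul_neg, neg_div, div_self h]
  rw [reflection_apply, this]; module

end LinearMap.BilinForm

lemma Subgroup.mem_map_connectedComponentOfOne_of_path {G : Type*} [Group G]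
    [TopologicalSpace G] [IsTopologicalGroup G] (H : Subgroup G) {γ : ℝ → G}
    (hγ : Continuous γ) (hH : ∀ t, γ t ∈ H) (h0 : γ 0 = 1) (t : ℝ) :
    γ t ∈ (Subgroup.connectedComponentOfOne H).map H.subtype := by
  let γH : ℝ → H := fun t => ⟨γ t, hH t⟩
  have hrange : Set.range γH ⊆ connectedComponent 1 :=
    (isPreconnected_range (hγ.subtype_mk hH)).subset_connectedComponent ⟨0, Subtype.ext h0⟩
  exact ⟨γH t, hrange ⟨t, rfl⟩, rfl⟩

section Minkowski

variable {n : ℕ}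

def minkowskiForm (n : ℕ) : LinearMap.BilinForm ℝ (Mink n) :=
  Matrix.toBilin' (diagonal (Fin.lastCases (-1) fun _ => 1))

lemma minkowskiForm_apply (u w : Mink n) :
    minkowskiForm n u w =
      ∑ i : Fin n, u i.castSucc * w i.castSucc - u (Fin.last n) * w (Fin.last n) := by
  simp [minkowskiForm, Matrix.toBilin'_apply', dotProduct, mulVec_diagonal, Fin.sum_univ_castSucc]
  ring

lemma minkowskiForm_isSymm : (minkowskiForm n).IsSymm :=
  ⟨fun u w => by simp only [minkowskiForm_apply, mul_comm (u _) (w _)]⟩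

lemma minkowskiForm_self (u : Mink n) : minkowskiForm n u u = eta n u := by
  simp only [minkowskiForm_apply, eta, sq]

lemma minkowskiForm_single_last (u : Mink n) (s : ℝ) :
    minkowskiForm n u (Pi.single (Fin.last n) s) = -(u (Fin.last n) * s) := by
  simp [minkowskiForm_apply, (Fin.castSucc_lt_last _).ne]

lemma eta_neg (u : Mink n) : eta n (-u) = eta n u := by
  simp [eta]

lemma eta_single_castSucc_add_single_last (i : Fin n) (x h : ℝ) :
    eta n (Pi.single i.castSucc x + Pi.single (Fin.last n) h) = x ^ 2 - h ^ 2 := by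
  simp [eta, Pi.single_apply, (Fin.castSucc_lt_last _).ne, Fin.castSucc_inj]

lemma eta_add_single_last (u : Mink n) (s : ℝ) :
    eta n (u + Pi.single (Fin.last n) s) = eta n u - 2 * s * u (Fin.last n) - s ^ 2 := by
  simp [eta, (Fin.castSucc_lt_last _).ne]
  ring

def reflectionGL (a : Mink n) : GL (Fin (n + 1)) ℝ where
  val := LinearMap.toMatrix' ((minkowskiForm n).reflection a)
  inv := LinearMap.toMatrix' ((minkowskiForm n).reflection a)
  val_inv := by
    rw [← LinearMap.toMatrix'_mul, LinearMap.BilinForm.reflection_mul_self,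
      LinearMap.toMatrix'_one]
  inv_val := by
    rw [← LinearMap.toMatrix'_mul, LinearMap.BilinForm.reflection_mul_self,
      LinearMap.toMatrix'_one]

lemma reflectionGL_mulVec (a u : Mink n) :
    (reflectionGL a : Matrix _ _ ℝ) *ᵥ u = (minkowskiForm n).reflection a u :=
  LinearMap.toMatrix'_mulVec _ u

lemma reflectionGL_mem_lorentzGroup (a : Mink n) : reflectionGL a ∈ LorentzGroup n := fun u => by
  rw [reflectionGL_mulVec, ← minkowskiForm_self, ← minkowskiForm_self,
    LinearMap.BilinForm.apply_reflection_reflection minkowskiForm_isSymm]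

lemma continuous_reflectionGL {a : ℝ → Mink n} (ha : Continuous a)
    (h : ∀ t, minkowskiForm n (a t) (a t) ≠ 0) : Continuous fun t => reflectionGL (a t) := by
  have hval :
      Continuous fun t => (reflectionGL (a t) : Matrix (Fin (n + 1)) (Fin (n + 1)) ℝ) := by
    refine continuous_matrix fun i j => ?_
    simp only [reflectionGL, LinearMap.toMatrix'_apply, LinearMap.BilinForm.reflection_apply,
      minkowskiForm_apply, Pi.sub_apply, Pi.smul_apply, smul_eq_mul]
    have hai : ∀ k, Continuous fun t => a t k := fun k => (continuous_apply k).comp ha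
    refine continuous_const.sub (Continuous.mul (Continuous.div ?_ ?_ ?_) (hai i))
    · fun_prop
    · fun_prop
    · simpa [minkowskiForm_apply] using h
  exact Units.continuous_iff.2 ⟨hval, hval⟩

def upperSheet (n : ℕ) (s : ℝ) : Set (Mink n) := {p | eta n p = -s ^ 2 ∧ 0 < p (Fin.last n)}

lemma single_last_mem_upperSheet {s : ℝ} (hs : 0 < s) :
    Pi.single (Fin.last n) s ∈ upperSheet n s := by
  refine ⟨?_, by simpa using hs⟩
  simp [eta, (Fin.castSucc_lt_last _).ne]

lemma mem_upperSheet_or_neg_mem_upperSheet {r : ℝ} (hr : r ≠ 0) {v : Mink n}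
    (hv : eta n v = -r ^ 2) :
    v ∈ upperSheet n r ∨ -v ∈ upperSheet n r := by
  have hlast : v (Fin.last n) ≠ 0 := by
    intro h0
    have : 0 ≤ ∑ i : Fin n, v i.castSucc ^ 2 := Finset.sum_nonneg fun _ _ => sq_nonneg _
    simp only [eta, h0] at hv
    nlinarith [sq_pos_of_ne_zero hr]
  rcases hlast.lt_or_gt with h | h
  · exact Or.inr ⟨(eta_neg v).trans hv, by simpa using h⟩
  · exact Or.inl ⟨hv, h⟩

lemma minkowskiForm_smul_add_single_last_neg {s c : ℝ} (hs : 0 < s) (hc : 0 ≤ c) {p : Mink n}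
    (hp : p ∈ upperSheet n s) :
    minkowskiForm n (c • p + Pi.single (Fin.last n) s) (c • p + Pi.single (Fin.last n) s)
      < 0 := by
  have hpp : minkowskiForm n p p = -s ^ 2 := (minkowskiForm_self p).trans hp.1
  have hee : minkowskiForm n (Pi.single (Fin.last n) s) (Pi.single (Fin.last n) s) = -s ^ 2 := by
    simp [minkowskiForm_single_last, sq]
  simp only [map_add, map_smul, LinearMap.add_apply, LinearMap.smul_apply, smul_eq_mul, hpp, hee,
    minkowskiForm_single_last, minkowskiForm_isSymm.eq (Pi.single _ _) p]
  nlinarith [mul_nonneg (mul_nonneg hc hc) (sq_nonneg s), mul_nonneg hc (mul_pos hp.2 hs).le]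

lemma exists_mem_SOo_mulVec_single_last {s : ℝ} (hs : 0 < s) {p : Mink n}
    (hp : p ∈ upperSheet n s) :
    ∃ A ∈ SOo n, (A : Matrix _ _ ℝ) *ᵥ Pi.single (Fin.last n) s = p := by
  set e : Mink n := Pi.single (Fin.last n) s
  let a : ℝ → Mink n := fun t => t ^ 2 • p + e
  let γ : ℝ → GL (Fin (n + 1)) ℝ := fun t => reflectionGL (a t) * reflectionGL e
  have ha : ∀ t, minkowskiForm n (a t) (a t) ≠ 0 := fun t =>
    (minkowskiForm_smul_add_single_last_neg hs (sq_nonneg t) hp).ne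
  have hee : minkowskiForm n e e ≠ 0 := by simpa [a] using ha 0
  have hγ : Continuous γ :=
    (continuous_reflectionGL (by fun_prop) ha).mul continuous_const
  have hγ0 : γ 0 = 1 := by
    simp only [γ, a, sq, mul_zero, zero_smul, zero_add]
    exact Units.ext (by simp [reflectionGL, ← LinearMap.toMatrix'_mul,
      LinearMap.BilinForm.reflection_mul_self])
  have hγL : ∀ t, γ t ∈ LorentzGroup n := fun t =>
    mul_mem (reflectionGL_mem_lorentzGroup _) (reflectionGL_mem_lorentzGroup _)
  refine ⟨γ 1, Subgroup.mem_map_connectedComponentOfOne_of_path _ hγ hγL hγ0 1, ?_⟩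
  have hpe : minkowskiForm n p p = minkowskiForm n e e := by
    rw [minkowskiForm_self, minkowskiForm_self, hp.1, (single_last_mem_upperSheet hs).1]
  simp only [γ, a, Units.val_mul, ← mulVec_mulVec, reflectionGL_mulVec, one_pow, one_smul,
    LinearMap.BilinForm.reflection_apply_self hee]
  exact LinearMap.BilinForm.reflection_add_apply_neg minkowskiForm_isSymm hpe
    (by simpa [a] using ha 1)

end Minkowski

section Invariant

variable {n : ℕ} {T : AddSubgroup (Mink n)}

def IsSOoInvariant (T : AddSubgroup (Mink n)) : Prop :=
  ∀ A ∈ SOo n, ∀ v ∈ T, (A : Matrix _ _ ℝ) *ᵥ v ∈ T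

lemma upperSheet_subset_of_mem
    (hT : IsSOoInvariant T) {s : ℝ} (hs : 0 < s) {p : Mink n} (hp : p ∈ upperSheet n s)
    (hpT : p ∈ T) :
    upperSheet n s ⊆ T := by
  intro q hq
  obtain ⟨A, hA, rfl⟩ := exists_mem_SOo_mulVec_single_last hs hp
  obtain ⟨B, hB, rfl⟩ := exists_mem_SOo_mulVec_single_last hs hq
  have h := hT (B * A⁻¹) (mul_mem hB (inv_mem hA)) _ hpT
  rwa [Units.val_mul, ← mulVec_mulVec,
    mulVec_mulVec _ _ (A : Matrix (Fin (n + 1)) (Fin (n + 1)) ℝ),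
    ← Units.val_mul, inv_mul_cancel, Units.val_one, one_mulVec] at h

lemma single_last_mem_of_upperSheet_subset (hn : 1 ≤ n) {r s : ℝ} (hr : 0 < r)
    (hsub : upperSheet n r ⊆ T) (hs : 2 * r ≤ s) : Pi.single (Fin.last n) s ∈ T := by
  set i : Fin n := ⟨0, hn⟩
  set x := Real.sqrt (s ^ 2 / 4 - r ^ 2)
  have hx : x ^ 2 = s ^ 2 / 4 - r ^ 2 := Real.sq_sqrt (by nlinarith)
  have hmem : ∀ y, y ^ 2 = x ^ 2 →
      Pi.single i.castSucc y + Pi.single (Fin.last n) (s / 2) ∈ T := fun y hy =>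
    hsub ⟨by rw [eta_single_castSucc_add_single_last]; nlinarith, by simp; linarith⟩
  have := T.add_mem (hmem x rfl) (hmem (-x) (neg_sq x))
  rwa [add_add_add_comm, ← Pi.single_add, ← Pi.single_add, add_neg_cancel, Pi.single_zero,
    zero_add, add_halves] at this

lemma mem_of_eta_le
    (hT : IsSOoInvariant T) (hn : 1 ≤ n) {r : ℝ} (hr : 0 < r) (hsub : upperSheet n r ⊆ T)
    {u : Mink n} (hu : eta n u ≤ -(2 * r) ^ 2) (hul : 0 < u (Fin.last n)) : u ∈ T := by
  set s := Real.sqrt (-eta n u)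
  have hs : 2 * r ≤ s := Real.le_sqrt_of_sq_le (by linarith)
  have hs0 : 0 < s := by linarith
  have hus : u ∈ upperSheet n s := ⟨by rw [Real.sq_sqrt (by nlinarith)]; ring, hul⟩
  exact upperSheet_subset_of_mem hT hs0 (single_last_mem_upperSheet hs0)
    (single_last_mem_of_upperSheet_subset hn hr hsub hs) hus

lemma eq_top_of_upperSheet_subset
    (hT : IsSOoInvariant T) (hn : 1 ≤ n) {r : ℝ} (hr : 0 < r) (hsub : upperSheet n r ⊆ T) :
    T = ⊤ := by
  refine (AddSubgroup.eq_top_iff' T).2 fun x => ?_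
  set m := x (Fin.last n)
  set s := 2 * r + 2 * |m| + |eta n x| + 1
  have hm := abs_nonneg m
  have hE := abs_nonneg (eta n x)
  have hs : 2 * r ≤ s := by linarith
  have hxs : x + Pi.single (Fin.last n) s ∈ T := by
    refine mem_of_eta_le hT hn hr hsub ?_ (by simp; linarith [neg_abs_le m])
    rw [eta_add_single_last]
    have hsm : -(s * |m|) ≤ s * m := by nlinarith [neg_abs_le m]
    nlinarith [le_abs_self (eta n x)]
  simpa using T.sub_mem hxs (single_last_mem_of_upperSheet_subset hn hr hsub hs)

end Invariant

/-- If an `SO₀(n,1)`-invariant additive subgroup `T` of `ℝ^{n+1}` contains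
a timelike vector `v` with `η(v) = −r²` (`r > 0`), then `T` contains a nonzero spacelike
vector, in fact one with `η(w) = r²`; consequently `T = ℝ^{n+1}`. -/
theorem invariant_addSubgroup_eq_top_of_timelike (n : ℕ) (hn : 1 ≤ n) (r : ℝ) (hr : 0 < r)
    (T : AddSubgroup (Mink n))
    (hinv : ∀ A : GL (Fin (n + 1)) ℝ, A ∈ SOo n → ∀ v ∈ T, (A : Matrix (Fin (n + 1)) (Fin (n + 1)) ℝ) *ᵥ v ∈ T)
    (v : Mink n) (hvT : v ∈ T) (hv : eta n v = -r ^ 2) :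
    ((∃ w ∈ T, 0 < eta n w) ∧ ∃ w ∈ T, eta n w = r ^ 2) ∧ T = ⊤ := by
  have hsub : upperSheet n r ⊆ T := by
    rcases mem_upperSheet_or_neg_mem_upperSheet hr.ne' hv with h | h
    · exact upperSheet_subset_of_mem hinv hr h hvT
    · exact upperSheet_subset_of_mem hinv hr h (T.neg_mem hvT)
  have htop : T = ⊤ := eq_top_of_upperSheet_subset hinv hn hr hsub
  set w : Mink n := Pi.single (⟨0, hn⟩ : Fin n).castSucc r
  have hw : eta n w = r ^ 2 := by
    have := eta_single_castSucc_add_single_last (⟨0, hn⟩ : Fin n) r 0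
    rwa [Pi.single_zero, add_zero, zero_pow two_ne_zero, sub_zero] at this
  have hwT : w ∈ T := htop ▸ AddSubgroup.mem_top w
  exact ⟨⟨⟨w, hwT, hw ▸ by positivity⟩, ⟨w, hwT, hw⟩⟩, htop⟩
end
end
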